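/- Let F_q be a finite field with q elements of characteristic greater than 2. Suppose x, y, z, w ∈ F_q² with (x,y) ≠ (z,w) and ‖x−y‖ = ‖z−w‖ ≠ 0. If x−y ≠ z−w, then the number of ordered pairs of reflections (𝒮₁, 𝒮₂) with 𝒮₁(x) = 𝒮₂(z) and 𝒮₁(y) = 𝒮₂(w) is exactly q−1 when q ≡ 1 (mod 4) and exactly q+1 when q ≡ 3 (mod 4). If x−y = z−w and ‖x−z‖ ≠ 0, there are exactly q such pairs of reflections. If x−y = z−w and ‖x−z‖ = 0, there are no such pairs of reflections. -/

import Mathlib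

/-- The "norm" of a point of `F × F`: `‖(x₁,x₂)‖ = x₁² + x₂²`. -/
def nrm {F : Type*} [Field F] (x : F × F) : F := x.1 ^ 2 + x.2 ^ 2

/-- The linear map given by the reflection matrix `[[a,b],[b,−a]]`. -/
def refLin {F : Type*} [Field F] (a b : F) (v : F × F) : F × F :=
  (a * v.1 + b * v.2, b * v.1 - a * v.2)

/-- The reflection about `u` by the reflection matrix `[[a,b],[b,−a]]`: `v ↦ S(v−u)+u`. -/
def refAbout {F : Type*} [Field F] (a b : F) (u : F × F) : (F × F) → (F × F) :=
  fun v => refLin a b (v - u) + u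

/-- `f` is a reflection of `F²`. -/
def IsReflection {F : Type*} [Field F] (f : (F × F) → (F × F)) : Prop :=
  ∃ a b : F, a ^ 2 + b ^ 2 = 1 ∧ ∃ u : F × F, f = refAbout a b u

/-- The set of ordered pairs of reflections `(𝒮₁, 𝒮₂)` with `𝒮₁(x) = 𝒮₂(z)` and
`𝒮₁(y) = 𝒮₂(w)`. -/
def reflPairs {F : Type*} [Field F] (x y z w : F × F) :
    Set (((F × F) → (F × F)) × ((F × F) → (F × F))) :=
  {p | IsReflection p.1 ∧ IsReflection p.2 ∧ p.1 x = p.2 z ∧ p.1 y = p.2 w}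

/-!
Identify `F × F` with `F[i] = F[X]/(X² + 1)`, so that `‖v‖` is the norm of `v`. The reflection
matrix `[[a,b],[b,−a]]` acts as `v ↦ c v̄` with `c = a + bi`, hence the reflections are the maps
`v ↦ c v̄ + t` with `c c̄ = 1` and `c t̄ = −t`.

Since `‖x − y‖ = ‖z − w‖ ≠ 0` there is a rotation-translation `g : v ↦ r v + s` with `g x = z`,
`g y = w`, and a map `v ↦ c v̄ + t` is determined by its values at two points at nonzero
distance. So the admissible pairs are exactly the `(𝒮 ∘ g, 𝒮)` with `𝒮` and `𝒮 ∘ g` both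
reflections, and `𝒮 ∘ g` is a reflection iff `(1 − r̄) t = −(r̄ s + c s̄)`.
If `r ≠ 1`, i.e. `x − y ≠ z − w`, every `c` on the unit circle admits exactly one `t`, and by
stereographic projection the circle has `q − χ₄(q)` points.
If `r = 1`, the condition reads `c s̄ = −s` with `s = z − x ≠ 0`: for `‖s‖ ≠ 0` it fixes `c` and
leaves `t` free on the line `F s`, while for isotropic `s` it has no solution on the circle.
-/

open QuadraticAlgebra

namespace QuadraticAlgebra

instance {R : Type*} [Finite R] {a b : R} : Finite (QuadraticAlgebra R a b) :=
  Finite.of_equiv _ (equivProd a b).symm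

variable {F : Type*} [Field F]

lemma star_algebraMap {a b : F} (r : F) :
    star (algebraMap F (QuadraticAlgebra F a b) r) = algebraMap F _ r := by
  ext <;> simp

lemma isUnit_of_norm_ne_zero {a b : F} {z : QuadraticAlgebra F a b} (h : z.norm ≠ 0) : IsUnit z :=
  isUnit_iff_norm_isUnit.mpr h.isUnit

lemma eq_algebraMap_re_of_star_eq (h2 : (2 : F) ≠ 0) {a : F} {z : QuadraticAlgebra F a 0}
    (h : star z = z) : z = algebraMap F _ z.re := by
  have him := congrArg QuadraticAlgebra.im h
  rw [im_star] at him
  ext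
  · simp
  · simpa using (mul_eq_zero.mp (by linear_combination -him : (2 : F) * z.im = 0)).resolve_left h2

lemma exists_mem_unitary_mul_eq {a b : F} {D E : QuadraticAlgebra F a b} (hD : D.norm ≠ 0)
    (h : D.norm = E.norm) : ∃ r ∈ unitary (QuadraticAlgebra F a b), r * D = E := by
  have hinv : algebraMap F (QuadraticAlgebra F a b) D.norm⁻¹ * algebraMap F _ D.norm = 1 := by
    rw [← map_mul, inv_mul_cancel₀ hD, map_one]
  refine ⟨algebraMap F _ D.norm⁻¹ * (E * star D), ?_, ?_⟩
  · rw [← norm_eq_one_iff_mem_unitary, map_mul, map_mul, norm_algebraMap, norm_star, ← h]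
    field_simp
  · linear_combination E * hinv - algebraMap F _ D.norm⁻¹ * E * algebraMap_norm_eq_mul_star D

end QuadraticAlgebra

section GaussianPlane

variable {F : Type*} [Field F]

local notation "F[i]" => QuadraticAlgebra F (-1) 0

def ofPair : F × F ≃ F[i] := (equivProd (-1) 0).symm

@[simp] lemma ofPair_re (v : F × F) : (ofPair v).re = v.1 := rfl

@[simp] lemma ofPair_im (v : F × F) : (ofPair v).im = v.2 := rfl

lemma ofPair_sub (v w : F × F) : ofPair (v - w) = ofPair v - ofPair w := rfl

lemma norm_eq_re_sq_add_im_sq (z : F[i]) : z.norm = z.re ^ 2 + z.im ^ 2 := by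
  rw [norm_def]; ring

lemma nrm_eq_norm_ofPair (v : F × F) : nrm v = (ofPair v).norm := by
  rw [norm_eq_re_sq_add_im_sq]; rfl

lemma eq_zero_of_mul_self_eq_zero_of_two_ne_zero (h2 : (2 : F) ≠ 0) {z : F[i]} (h : z * z = 0) :
    z = 0 := by
  have hre : z.re * z.re = z.im * z.im := by
    have := congrArg QuadraticAlgebra.re h
    simp only [re_mul, re_zero] at this
    linear_combination this
  have him : z.re * z.im = 0 := by
    have := congrArg QuadraticAlgebra.im h
    simp only [im_mul, im_zero] at this
    refine (mul_eq_zero.mp ?_).resolve_left h2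
    linear_combination this
  rcases mul_eq_zero.mp him with h0 | h0
  · ext
    · exact h0
    · simpa [h0, eq_comm] using hre
  · ext
    · simpa [h0] using hre
    · exact h0

lemma eq_of_mem_unitary_of_norm_sub_eq_zero (h2 : (2 : F) ≠ 0) {c c' : F[i]}
    (hc : c ∈ unitary F[i]) (hc' : c' ∈ unitary F[i]) (h : (c - c').norm = 0) : c = c' := by
  have hsq : (c - c') * (c - c') = -(c * c') * algebraMap F F[i] (c - c').norm := by
    rw [algebraMap_norm_eq_mul_star, star_sub]
    linear_combination (c * c' - c' ^ 2) * Unitary.mul_star_self_of_mem hc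
      + (c * c' - c ^ 2) * Unitary.mul_star_self_of_mem hc'
  rw [h, map_zero, mul_zero] at hsq
  exact sub_eq_zero.mp (eq_zero_of_mul_self_eq_zero_of_two_ne_zero h2 hsq)

lemma eq_zero_of_mul_star_eq_neg_of_norm_eq_zero (h2 : (2 : F) ≠ 0) {c s : F[i]}
    (hs : c * star s = -s) (h : s.norm = 0) : s = 0 := by
  have hsq : s * s = -c * algebraMap F F[i] s.norm := by
    rw [algebraMap_norm_eq_mul_star]
    linear_combination s * hs
  rw [h, map_zero, mul_zero] at hsq
  exact eq_zero_of_mul_self_eq_zero_of_two_ne_zero h2 hsq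

lemma re_sq_add_im_sq_of_mem_unitary {c : F[i]} (hc : c ∈ unitary F[i]) :
    c.re ^ 2 + c.im ^ 2 = 1 := by
  rw [← norm_eq_re_sq_add_im_sq, norm_eq_one_iff_mem_unitary]
  exact hc

lemma one_add_re_ne_zero {c : F[i]} (hc : c ∈ unitary F[i]) (h : c ≠ -1) : 1 + c.re ≠ 0 := by
  intro h1
  have hn := re_sq_add_im_sq_of_mem_unitary hc
  have hre : c.re = -1 := by linear_combination h1
  have him : c.im = 0 :=
    pow_eq_zero_iff two_ne_zero |>.mp (by rw [hre] at hn; linear_combination hn)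
  exact h (by ext <;> simp [hre, him])

def stereo (m : F) : F[i] := ⟨(1 - m ^ 2) / (1 + m ^ 2), 2 * m / (1 + m ^ 2)⟩

lemma stereo_mem_unitary_diff (h2 : (2 : F) ≠ 0) {m : F} (hm : m ^ 2 ≠ -1) :
    stereo m ∈ (unitary F[i] : Set F[i]) \ {-1} := by
  have hden : 1 + m ^ 2 ≠ 0 := fun h => hm (by linear_combination h)
  refine ⟨?_, fun h => ?_⟩
  · rw [SetLike.mem_coe, ← norm_eq_one_iff_mem_unitary, norm_eq_re_sq_add_im_sq, stereo]
    field_simp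
    ring
  · have hre := congrArg QuadraticAlgebra.re h
    simp only [stereo, re_neg, re_one] at hre
    field_simp at hre
    exact h2 (by linear_combination hre)

lemma stereo_inv_stereo (h2 : (2 : F) ≠ 0) {m : F} (hm : m ^ 2 ≠ -1) :
    (stereo m).im / (1 + (stereo m).re) = m := by
  have hden : 1 + m ^ 2 ≠ 0 := fun h => hm (by linear_combination h)
  have hsum : 1 + (1 - m ^ 2) / (1 + m ^ 2) = 2 / (1 + m ^ 2) := by field_simp; ring
  rw [stereo, hsum, div_div_div_cancel_right₀ hden, mul_div_cancel_left₀ m h2]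

lemma sq_stereo_inv_ne_neg_one (h2 : (2 : F) ≠ 0) {c : F[i]}
    (hc : c ∈ (unitary F[i] : Set F[i]) \ {-1}) : (c.im / (1 + c.re)) ^ 2 ≠ -1 := by
  have h1 := one_add_re_ne_zero hc.1 hc.2
  have hn := re_sq_add_im_sq_of_mem_unitary hc.1
  intro hsq
  field_simp at hsq
  refine h1 ((mul_eq_zero.mp ?_).resolve_left h2)
  linear_combination hsq - hn

lemma stereo_stereo_inv (h2 : (2 : F) ≠ 0) {c : F[i]} (hc : c ∈ (unitary F[i] : Set F[i]) \ {-1}) :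
    stereo (c.im / (1 + c.re)) = c := by
  have h1 := one_add_re_ne_zero hc.1 hc.2
  have hn := re_sq_add_im_sq_of_mem_unitary hc.1
  have hsum : 1 + (c.im / (1 + c.re)) ^ 2 = 2 / (1 + c.re) := by
    field_simp
    linear_combination hn
  ext <;> rw [stereo, hsum]
  · field_simp
    linear_combination -hn
  · field_simp

lemma ncard_unitary_add_ncard_sqrt_neg_one [Finite F] (h2 : (2 : F) ≠ 0) :
    (unitary F[i] : Set F[i]).ncard + {m : F | m ^ 2 = -1}.ncard = Nat.card F + 1 := by
  have hbij : Set.BijOn stereo {m : F | m ^ 2 = -1}ᶜ ((unitary F[i] : Set F[i]) \ {-1}) :=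
    Set.InvOn.bijOn (f' := fun c => c.im / (1 + c.re))
      ⟨fun _ hm => stereo_inv_stereo h2 hm, fun _ hc => stereo_stereo_inv h2 hc⟩
      (fun _ hm => stereo_mem_unitary_diff h2 hm) (fun _ hc => sq_stereo_inv_ne_neg_one h2 hc)
  have hneg : (-1 : F[i]) ∈ unitary F[i] := by
    rw [← norm_eq_one_iff_mem_unitary, QuadraticAlgebra.norm_neg, QuadraticAlgebra.norm_one]
  rw [← Set.ncard_sdiff_singleton_add_one hneg, ← hbij.image_eq, hbij.injOn.ncard_image,
    ← Set.ncard_add_ncard_compl {m : F | m ^ 2 = -1}]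
  ring

lemma ncard_unitary [Fintype F] (hF : ringChar F ≠ 2) :
    ((unitary F[i] : Set F[i]).ncard : ℤ) = Fintype.card F - ZMod.χ₄ (Fintype.card F) := by
  classical
  have hsum := congrArg (Nat.cast : ℕ → ℤ)
    (ncard_unitary_add_ncard_sqrt_neg_one (F := F) (Ring.two_ne_zero hF))
  have hsqrt := quadraticChar_card_sqrts hF (-1)
  rw [quadraticChar_neg_one hF, ← Set.ncard_eq_toFinset_card'] at hsqrt
  push_cast [Nat.card_eq_fintype_card] at hsum
  linarith

end GaussianPlane

section Reflections

variable {F : Type*} [Field F]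

local notation "F[i]" => QuadraticAlgebra F (-1) 0
def conjAffine (c t : F[i]) (v : F × F) : F × F := ofPair.symm (c * star (ofPair v) + t)

def mulAffine (r s : F[i]) (v : F × F) : F × F := ofPair.symm (r * ofPair v + s)

lemma ofPair_conjAffine (c t : F[i]) (v : F × F) :
    ofPair (conjAffine c t v) = c * star (ofPair v) + t :=
  ofPair.apply_symm_apply _

lemma conjAffine_comp_mulAffine (c t r s : F[i]) :
    conjAffine c t ∘ mulAffine r s = conjAffine (c * star r) (c * star s + t) := by
  funext v
  simp only [Function.comp, conjAffine, mulAffine, Equiv.apply_symm_apply, star_add, star_mul]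
  congr 1
  ring

lemma eq_of_conjAffine_eq {c t c' t' : F[i]} {x y : F × F} (hxy : (ofPair x - ofPair y).norm ≠ 0)
    (hx : conjAffine c t x = conjAffine c' t' x) (hy : conjAffine c t y = conjAffine c' t' y) :
    c = c' ∧ t = t' := by
  have hx' := congrArg ofPair hx
  have hy' := congrArg ofPair hy
  simp only [ofPair_conjAffine] at hx' hy'
  have hc : c = c' := by
    have hu : IsUnit (star (ofPair x - ofPair y)) :=
      isUnit_of_norm_ne_zero (by rwa [QuadraticAlgebra.norm_star])
    refine hu.mul_left_cancel ?_
    rw [star_sub]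
    linear_combination hx' - hy'
  subst hc
  exact ⟨rfl, by linear_combination hx'⟩

lemma conjAffine_injective {c t c' t' : F[i]} (h : conjAffine c t = conjAffine c' t') :
    c = c' ∧ t = t' :=
  eq_of_conjAffine_eq (x := (1, 0)) (y := 0) (by simp [norm_eq_re_sq_add_im_sq])
    (congrFun h _) (congrFun h _)

def reflParams : Set (F[i] × F[i]) := {p | p.1 ∈ unitary F[i] ∧ p.1 * star p.2 = -p.2}

lemma refAbout_eq_conjAffine (a b : F) (u : F × F) :
    refAbout a b u = conjAffine ⟨a, b⟩ (ofPair u - ⟨a, b⟩ * star (ofPair u)) := by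
  funext v
  apply ofPair.injective
  rw [ofPair_conjAffine]
  ext <;> simp [refAbout, refLin] <;> ring

lemma isReflection_iff (h2 : (2 : F) ≠ 0) {f : F × F → F × F} :
    IsReflection f ↔ ∃ p ∈ reflParams, conjAffine p.1 p.2 = f := by
  constructor
  · rintro ⟨a, b, hab, u, rfl⟩
    have hc : (⟨a, b⟩ : F[i]) ∈ unitary F[i] := by
      rw [← norm_eq_one_iff_mem_unitary, norm_eq_re_sq_add_im_sq]; exact hab
    refine ⟨(⟨a, b⟩, ofPair u - ⟨a, b⟩ * star (ofPair u)), ⟨hc, ?_⟩,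
      (refAbout_eq_conjAffine a b u).symm⟩
    simp only [star_sub, star_mul, star_star]
    linear_combination (-ofPair u) * Unitary.mul_star_self_of_mem hc
  · rintro ⟨⟨c, t⟩, ⟨hc, ht⟩, rfl⟩
    refine ⟨c.re, c.im, ?_, ofPair.symm (algebraMap F F[i] 2⁻¹ * t), ?_⟩
    · rw [← norm_eq_re_sq_add_im_sq, norm_eq_one_iff_mem_unitary]; exact hc
    · have hhalf : algebraMap F F[i] 2⁻¹ * 2 = 1 := by
        rw [← map_ofNat (algebraMap F F[i]) 2, ← map_mul, inv_mul_cancel₀ h2, map_one]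
      rw [refAbout_eq_conjAffine, Equiv.apply_symm_apply, mk_eta, star_mul, star_algebraMap]
      congr 1
      linear_combination (-t) * hhalf + algebraMap F F[i] 2⁻¹ * ht

lemma isReflection_conjAffine_iff (h2 : (2 : F) ≠ 0) {c t : F[i]} :
    IsReflection (conjAffine c t) ↔ (c, t) ∈ reflParams := by
  rw [isReflection_iff h2]
  constructor
  · rintro ⟨p, hp, hpf⟩
    obtain ⟨rfl, rfl⟩ := conjAffine_injective hpf
    exact hp
  · exact fun h => ⟨_, h, rfl⟩

def factorParams (r s : F[i]) : Set (F[i] × F[i]) :=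
  {p | p ∈ reflParams ∧ (p.1 * star r, p.1 * star s + p.2) ∈ reflParams}

lemma setOf_isReflection_comp_eq_image (h2 : (2 : F) ≠ 0) (r s : F[i]) :
    {f | IsReflection f ∧ IsReflection (f ∘ mulAffine r s)} =
      (fun p => conjAffine p.1 p.2) '' factorParams r s := by
  ext f
  constructor
  · rintro ⟨hf, hfg⟩
    obtain ⟨p, hp, rfl⟩ := (isReflection_iff h2).mp hf
    rw [conjAffine_comp_mulAffine, isReflection_conjAffine_iff h2] at hfg
    exact ⟨p, ⟨hp, hfg⟩, rfl⟩
  · rintro ⟨p, ⟨hp, hpg⟩, rfl⟩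
    rw [Set.mem_ofPred_eq, conjAffine_comp_mulAffine, isReflection_conjAffine_iff h2,
      isReflection_conjAffine_iff h2]
    exact ⟨hp, hpg⟩

lemma reflPairs_eq_image (h2 : (2 : F) ≠ 0) {x y z w : F × F} {r s : F[i]}
    (hxy : (ofPair x - ofPair y).norm ≠ 0) (hz : mulAffine r s x = z) (hw : mulAffine r s y = w) :
    reflPairs x y z w = (fun f => (f ∘ mulAffine r s, f)) ''
      {f | IsReflection f ∧ IsReflection (f ∘ mulAffine r s)} := by
  ext ⟨f₁, f₂⟩
  constructor
  · rintro ⟨h₁, h₂, hxz, hyw⟩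
    obtain ⟨⟨c₁, t₁⟩, -, rfl⟩ := (isReflection_iff h2).mp h₁
    obtain ⟨⟨c₂, t₂⟩, -, rfl⟩ := (isReflection_iff h2).mp h₂
    have hcomp : conjAffine c₁ t₁ = conjAffine c₂ t₂ ∘ mulAffine r s := by
      rw [conjAffine_comp_mulAffine]
      obtain ⟨hc, ht⟩ := eq_of_conjAffine_eq hxy
        (hxz.trans (by rw [← hz, ← conjAffine_comp_mulAffine]; rfl))
        (hyw.trans (by rw [← hw, ← conjAffine_comp_mulAffine]; rfl))
      exact congrArg₂ conjAffine hc ht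
    exact ⟨conjAffine c₂ t₂, ⟨h₂, hcomp ▸ h₁⟩, by rw [hcomp]⟩
  · rintro ⟨f, ⟨hf, hfg⟩, hpair⟩
    obtain ⟨rfl, rfl⟩ := Prod.mk.inj hpair
    exact ⟨hfg, hf, congrArg f hz, congrArg f hw⟩

lemma ncard_reflPairs_eq (h2 : (2 : F) ≠ 0) {x y z w : F × F} {r s : F[i]}
    (hxy : (ofPair x - ofPair y).norm ≠ 0) (hz : mulAffine r s x = z) (hw : mulAffine r s y = w) :
    (reflPairs x y z w).ncard = (factorParams r s).ncard := by
  rw [reflPairs_eq_image h2 hxy hz hw,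
    Set.ncard_image_of_injective _ fun _ _ h => congrArg Prod.snd h,
    setOf_isReflection_comp_eq_image h2,
    Set.ncard_image_of_injective _ fun _ _ h => Prod.ext_iff.mpr (conjAffine_injective h)]

lemma mem_factorParams_iff {r s : F[i]} (hr : r ∈ unitary F[i]) {p : F[i] × F[i]} :
    p ∈ factorParams r s ↔ p ∈ reflParams ∧ (1 - star r) * p.2 = -(star r * s + p.1 * star s) := by
  obtain ⟨c, t⟩ := p
  simp only [factorParams, reflParams, Set.mem_ofPred_eq, star_add, star_mul, star_star]
  constructor
  · rintro ⟨⟨hc, ht⟩, -, ht'⟩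
    refine ⟨⟨hc, ht⟩, ?_⟩
    linear_combination ht' - star r * s * Unitary.mul_star_self_of_mem hc - star r * ht
  · rintro ⟨⟨hc, ht⟩, h⟩
    refine ⟨⟨hc, ht⟩, mul_mem hc (Unitary.star_mem hr), ?_⟩
    linear_combination h + star r * s * Unitary.mul_star_self_of_mem hc + star r * ht

lemma exists_inv_one_sub_star (h2 : (2 : F) ≠ 0) {r : F[i]} (hr : r ∈ unitary F[i]) (hr1 : r ≠ 1) :
    ∃ u : F[i], u * (1 - star r) = 1 ∧ u = -(r * star u) := by
  have hunit : IsUnit (1 - star r) := by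
    refine isUnit_of_norm_ne_zero ?_
    rw [show (1 : F[i]) - star r = star (1 - r) by rw [star_sub, star_one],
      QuadraticAlgebra.norm_star]
    exact fun h => hr1 (eq_of_mem_unitary_of_norm_sub_eq_zero h2 (one_mem _) hr h).symm
  obtain ⟨u, hu⟩ := hunit.exists_left_inv
  have hu' : star u * (1 - r) = 1 := by
    simpa [mul_comm] using congrArg star hu
  refine ⟨u, hu, ?_⟩
  linear_combination (-(star u * r)) * hu - u * hu' - u * star u * Unitary.mul_star_self_of_mem hr

lemma ncard_factorParams_of_ne_one (h2 : (2 : F) ≠ 0) {r : F[i]} (s : F[i])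
    (hr : r ∈ unitary F[i]) (hr1 : r ≠ 1) :
    (factorParams r s).ncard = (unitary F[i] : Set F[i]).ncard := by
  obtain ⟨u, hu, hur⟩ := exists_inv_one_sub_star h2 hr hr1
  have himage : factorParams r s =
      (fun c => (c, -u * (star r * s + c * star s))) '' (unitary F[i] : Set F[i]) := by
    ext ⟨c, t⟩
    rw [mem_factorParams_iff hr]
    constructor
    · rintro ⟨⟨hc, -⟩, h⟩
      exact ⟨c, hc, Prod.ext rfl (by linear_combination t * hu - u * h)⟩
    · rintro ⟨c, hc, hct⟩
      obtain ⟨rfl, rfl⟩ := Prod.mk.inj hct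
      refine ⟨⟨hc, ?_⟩, by linear_combination (-(star r * s + c * star s)) * hu⟩
      simp only [star_mul, star_neg, star_add, star_star]
      linear_combination (-(star r * s + c * star s)) * hur
        + star u * s * Unitary.mul_star_self_of_mem hr
        - star u * s * Unitary.mul_star_self_of_mem hc
  rw [himage, Set.ncard_image_of_injective _ fun c c' h => congrArg Prod.fst h]

lemma mem_factorParams_one_iff {s : F[i]} {p : F[i] × F[i]} :
    p ∈ factorParams 1 s ↔ p ∈ reflParams ∧ p.1 * star s = -s := by
  rw [mem_factorParams_iff (one_mem _), star_one, sub_self, zero_mul, one_mul]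
  constructor <;> rintro ⟨hp, h⟩ <;> exact ⟨hp, by linear_combination h⟩

lemma factorParams_one_eq_empty (h2 : (2 : F) ≠ 0) {s : F[i]} (hs0 : s ≠ 0) (hs : s.norm = 0) :
    factorParams 1 s = ∅ :=
  Set.eq_empty_of_forall_notMem fun _ hp =>
    hs0 (eq_zero_of_mul_star_eq_neg_of_norm_eq_zero h2 (mem_factorParams_one_iff.mp hp).2 hs)

lemma mul_star_eq_algebraMap_re (h2 : (2 : F) ≠ 0) {c t s : F[i]} (hc : c ∈ unitary F[i])
    (ht : c * star t = -t) (hs : c * star s = -s) :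
    t * star s = algebraMap F F[i] (t * star s).re := by
  refine eq_algebraMap_re_of_star_eq h2 ?_
  rw [star_mul, star_star]
  linear_combination (t * star s - s * star t) * Unitary.mul_star_self_of_mem hc
    + star c * s * ht - star c * t * hs

lemma factorParams_one_eq_range (h2 : (2 : F) ≠ 0) {s : F[i]} (hs : s.norm ≠ 0) :
    factorParams 1 s = Set.range fun l : F =>
      (-(algebraMap F F[i] s.norm⁻¹ * (s * s)), algebraMap F F[i] l * s) := by
  have hinv : algebraMap F F[i] s.norm⁻¹ * (s * star s) = 1 := by
    rw [← algebraMap_norm_eq_mul_star, ← map_mul, inv_mul_cancel₀ hs, map_one]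
  ext ⟨c, t⟩
  rw [mem_factorParams_one_iff]
  constructor
  · rintro ⟨⟨hc, ht⟩, hcs⟩
    have hre := mul_star_eq_algebraMap_re h2 hc ht hcs
    refine ⟨(t * star s).re / s.norm, Prod.ext ?_ ?_⟩
    · linear_combination c * hinv - algebraMap F F[i] s.norm⁻¹ * s * hcs
    · dsimp only
      rw [div_eq_mul_inv, map_mul]
      linear_combination t * hinv - algebraMap F F[i] s.norm⁻¹ * s * hre
  · rintro ⟨l, hl⟩
    obtain ⟨rfl, rfl⟩ := Prod.mk.inj hl
    have hc : -(algebraMap F F[i] s.norm⁻¹ * (s * s)) * star s = -s := by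
      linear_combination -s * hinv
    refine ⟨⟨?_, ?_⟩, hc⟩
    · rw [← norm_eq_one_iff_mem_unitary, QuadraticAlgebra.norm_neg, map_mul, map_mul,
        QuadraticAlgebra.norm_algebraMap]
      field_simp
    · rw [star_mul, star_algebraMap]
      linear_combination algebraMap F F[i] l * hc

lemma ncard_factorParams_one (h2 : (2 : F) ≠ 0) {s : F[i]} (hs : s.norm ≠ 0) :
    (factorParams 1 s).ncard = Nat.card F := by
  rw [factorParams_one_eq_range h2 hs]
  refine Set.ncard_range_of_injective fun l l' h => ?_
  exact QuadraticAlgebra.algebraMap_injective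
    ((isUnit_of_norm_ne_zero hs).mul_left_inj.mp (congrArg Prod.snd h))

lemma mulAffine_apply_eq {x y z w : F × F} {r : F[i]}
    (h : r * (ofPair x - ofPair y) = ofPair z - ofPair w) :
    mulAffine r (ofPair z - r * ofPair x) x = z ∧ mulAffine r (ofPair z - r * ofPair x) y = w :=
  ⟨ofPair.symm_apply_eq.mpr (by ring), ofPair.symm_apply_eq.mpr (by linear_combination -h)⟩

end Reflections

/-- Suppose `(x,y) ≠ (z,w)` and `‖x−y‖ = ‖z−w‖ ≠ 0`.  If `x−y ≠ z−w`, the number of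
pairs of reflections `(𝒮₁,𝒮₂)` with `𝒮₁(x)=𝒮₂(z)`, `𝒮₁(y)=𝒮₂(w)` is `q−1` when
`q ≡ 1 (mod 4)` and `q+1` when `q ≡ 3 (mod 4)`.  If `x−y = z−w` and `‖x−z‖ ≠ 0`, there
are exactly `q` such pairs; if `x−y = z−w` and `‖x−z‖ = 0`, there are none. -/
theorem rotations_from_reflections (F : Type) [Field F] [Fintype F]
    (hchar : 2 < ringChar F) (x y z w : F × F)
    (hne : (x, y) ≠ (z, w)) (hd : nrm (x - y) = nrm (z - w)) (h0 : nrm (x - y) ≠ 0) :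
    (x - y ≠ z - w →
      (Fintype.card F % 4 = 1 → (reflPairs x y z w).ncard = Fintype.card F - 1) ∧
      (Fintype.card F % 4 = 3 → (reflPairs x y z w).ncard = Fintype.card F + 1)) ∧
    (x - y = z - w → nrm (x - z) ≠ 0 → (reflPairs x y z w).ncard = Fintype.card F) ∧
    (x - y = z - w → nrm (x - z) = 0 → (reflPairs x y z w).ncard = 0) := by
  have h2 : (2 : F) ≠ 0 := Ring.two_ne_zero hchar.ne'
  simp only [nrm_eq_norm_ofPair, ofPair_sub] at hd h0 ⊢
  obtain ⟨r, hr, hrD⟩ := exists_mem_unitary_mul_eq h0 hd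
  have hcard := ncard_reflPairs_eq h2 h0 (mulAffine_apply_eq hrD).1 (mulAffine_apply_eq hrD).2
  have hr1 : r = 1 ↔ x - y = z - w := by
    rw [← ofPair.injective.eq_iff, ofPair_sub, ofPair_sub, ← hrD]
    exact ⟨fun h => by rw [h, one_mul], fun h => (isUnit_of_norm_ne_zero h0).mul_right_cancel
      (by rw [← h, one_mul])⟩
  refine ⟨fun hD => ?_, fun hD hs => ?_, fun hD hs => ?_⟩
  · have hU := ncard_unitary (F := F) hchar.ne'
    rw [hcard, ncard_factorParams_of_ne_one h2 _ hr (mt hr1.mp hD)]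
    constructor <;> intro hq
    · rw [ZMod.χ₄_nat_one_mod_four hq] at hU; omega
    · rw [ZMod.χ₄_nat_three_mod_four hq] at hU; omega
  all_goals
    rw [hr1.mpr hD, one_mul] at hcard
    rw [hcard]
    rw [← QuadraticAlgebra.norm_neg, neg_sub] at hs
  · rw [ncard_factorParams_one h2 hs, Nat.card_eq_fintype_card]
  · have hzx : ofPair z - ofPair x ≠ 0 := by
      refine sub_ne_zero.mpr fun h => hne ?_
      obtain rfl := ofPair.injective h
      rw [sub_right_inj.mp hD]
    rw [factorParams_one_eq_empty h2 hzx hs, Set.ncard_empty]
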